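/- 4 − sqrt(10 + 2·sqrt(5)) > 3 − 2·sqrt(2). (The left side equals μ(2,6), the asymptotic algebraic connectivity of a random (2,6) semi-regular bipartite graph of average degree 3, and the right side equals μ_reg(3), that of a random cubic graph; so the (2,6) semi-regular bipartite graph beats the cubic graph with the same number of vertices and edges.) -/
import Mathlib


/-- `μ(2,6) = 4 − sqrt(10 + 2√5)` exceeds `μ_reg(3) = 3 − 2√2`: the random `(2,6)`
semi-regular bipartite graph of average degree 3 has higher asymptotic algebraic
connectivity than the random cubic graph with the same number of vertices and edges. -/
theorem mu_two_six_gt_mu_cubic :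
    3 - 2 * Real.sqrt 2 < 4 - Real.sqrt (10 + 2 * Real.sqrt 5) := by
  have h5 : Real.sqrt 5 ^ 2 = 5 := Real.sq_sqrt (by norm_num)
  have h2 : Real.sqrt 2 ^ 2 = 2 := Real.sq_sqrt (by norm_num)
  have h5n : (0:ℝ) ≤ Real.sqrt 5 := Real.sqrt_nonneg 5
  have h2n : (0:ℝ) ≤ Real.sqrt 2 := Real.sqrt_nonneg 2
  have h5lt : Real.sqrt 5 < 11/4 := by nlinarith
  have key : Real.sqrt (10 + 2 * Real.sqrt 5) < 1 + 2 * Real.sqrt 2 := by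
    have h2gt : 1 < Real.sqrt 2 := by nlinarith
    refine (Real.sqrt_lt' (by nlinarith)).mpr ?_
    nlinarith
  linarith
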